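/- arXiv:2211.09709 — 2 statements merged into one kernel-verified Lean document; each statement's English description precedes it below -/
import Mathlib

section
/- For a positive real a₁ and positive reals b₁,…,bₙ, the hypervolume f satisfies f(a₁; b₁,…,bₙ) = a₁ⁿ / ((a₁+b₁)(a₁+b₂)⋯(a₁+bₙ)). -/
open MeasureTheory Finset

/-- The hypervolume `f(a₁,…,aₘ; b₁,…,bₙ)`: the Lebesgue measure of the subset of the
unit hypercube `[0,1]ᵐ × [0,1]ⁿ` where `x₁^{a₁}⋯xₘ^{aₘ} < y₁^{b₁}⋯yₙ^{bₙ}`. -/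
noncomputable def hypervolume (m n : ℕ) (a : Fin m → ℝ) (b : Fin n → ℝ) : ℝ :=
  (volume {z : (Fin m → ℝ) × (Fin n → ℝ) |
    (∀ i, z.1 i ∈ Set.Icc (0 : ℝ) 1) ∧ (∀ j, z.2 j ∈ Set.Icc (0 : ℝ) 1) ∧
    ∏ i, (z.1 i) ^ (a i) < ∏ j, (z.2 j) ^ (b j)}).toReal

/-!
For fixed `y ∈ [0,1]ⁿ` with `P = ∏ yⱼ^{bⱼ} ∈ [0,1]`, the set of `x ∈ [0,1]` with `x^{a₁} < P`
is the interval `[0, P^{1/a₁})`, of length `∏ yⱼ^{bⱼ/a₁}`. By Fubini the hypervolume is the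
integral of this product over the cube, which splits into the one-dimensional integrals
`∫₀¹ t^{bⱼ/a₁} dt = a₁ / (a₁ + bⱼ)`.
-/

def hypervolumeSet (m n : ℕ) (a : Fin m → ℝ) (b : Fin n → ℝ) :
    Set ((Fin m → ℝ) × (Fin n → ℝ)) :=
  {z | (∀ i, z.1 i ∈ Set.Icc (0 : ℝ) 1) ∧ (∀ j, z.2 j ∈ Set.Icc (0 : ℝ) 1) ∧
    ∏ i, (z.1 i) ^ (a i) < ∏ j, (z.2 j) ^ (b j)}

theorem hypervolume_eq_toReal_volume (m n : ℕ) (a : Fin m → ℝ) (b : Fin n → ℝ) :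
    hypervolume m n a b = (volume (hypervolumeSet m n a b)).toReal :=
  rfl

theorem measurableSet_hypervolumeSet (m n : ℕ) (a : Fin m → ℝ) (b : Fin n → ℝ) :
    MeasurableSet (hypervolumeSet m n a b) := by
  simp only [hypervolumeSet, Set.ofPred_and, Set.ofPred_forall]
  refine .inter (.iInter fun i => ?_) (.inter (.iInter fun j => ?_) (measurableSet_lt ?_ ?_))
  · exact measurableSet_Icc.preimage (by fun_prop)
  · exact measurableSet_Icc.preimage (by fun_prop)
  · exact Finset.measurable_prod _ fun i _ => by fun_prop
  · exact Finset.measurable_prod _ fun j _ => by fun_prop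

theorem setOf_mem_Icc_rpow_lt_eq_Ico {a P : ℝ} (ha : 0 < a) (hP₀ : 0 ≤ P) (hP₁ : P ≤ 1) :
    {t : ℝ | t ∈ Set.Icc 0 1 ∧ t ^ a < P} = Set.Ico 0 (P ^ a⁻¹) := by
  ext t
  constructor
  · rintro ⟨⟨ht, -⟩, hlt⟩
    exact ⟨ht, (Real.lt_rpow_inv_iff_of_pos ht hP₀ ha).2 hlt⟩
  · rintro ⟨ht, hlt⟩
    exact ⟨⟨ht, hlt.le.trans (Real.rpow_le_one hP₀ hP₁ (inv_nonneg.2 ha.le))⟩,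
      (Real.lt_rpow_inv_iff_of_pos ht hP₀ ha).1 hlt⟩

theorem volume_hypervolumeSet_one_section {n : ℕ} {a : ℝ} {b : Fin n → ℝ} (ha : 0 < a)
    (hb : ∀ j, 0 ≤ b j) (y : Fin n → ℝ) :
    volume ((fun x : Fin 1 → ℝ => (x, y)) ⁻¹' hypervolumeSet 1 n (fun _ => a) b) =
      ENNReal.ofReal (∏ j, (Set.Icc 0 1).indicator (· ^ (b j / a)) (y j)) := by
  by_cases hy : ∀ j, y j ∈ Set.Icc 0 1
  · set P := ∏ j, y j ^ b j
    have hP₀ : 0 ≤ P := prod_nonneg fun j _ => Real.rpow_nonneg (hy j).1 _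
    have hP₁ : P ≤ 1 := prod_le_one (fun j _ => Real.rpow_nonneg (hy j).1 _)
      fun j _ => Real.rpow_le_one (hy j).1 (hy j).2 (hb j)
    have hsection : (fun x : Fin 1 → ℝ => (x, y)) ⁻¹' hypervolumeSet 1 n (fun _ => a) b =
        MeasurableEquiv.funUnique (Fin 1) ℝ ⁻¹' {t | t ∈ Set.Icc 0 1 ∧ t ^ a < P} := by
      ext x
      simp only [hypervolumeSet, Set.mem_preimage, Set.mem_ofPred_eq, Fin.forall_fin_one,
        Fin.prod_univ_one, MeasurableEquiv.funUnique_apply, Fin.default_eq_zero, hy,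
        implies_true, true_and, P]
    rw [hsection, setOf_mem_Icc_rpow_lt_eq_Ico ha hP₀ hP₁]
    refine ((volume_preserving_funUnique (Fin 1) ℝ).measure_preimage_equiv _).trans ?_
    rw [Real.volume_Ico, sub_zero,
      ← Real.finsetProd_rpow _ _ fun j _ => Real.rpow_nonneg (hy j).1 _]
    congr 1
    refine prod_congr rfl fun j _ => ?_
    rw [Set.indicator_of_mem (hy j), div_eq_mul_inv, Real.rpow_mul (hy j).1]
  · obtain ⟨j, hj⟩ := not_forall.1 hy
    have hsection : (fun x : Fin 1 → ℝ => (x, y)) ⁻¹' hypervolumeSet 1 n (fun _ => a) b = ∅ :=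
      Set.eq_empty_of_forall_notMem fun x hx => hy hx.2.1
    rw [hsection, prod_eq_zero (mem_univ j) (Set.indicator_of_notMem hj _), measure_empty,
      ENNReal.ofReal_zero]

theorem hypervolume_one_eq_integral {n : ℕ} {a : ℝ} {b : Fin n → ℝ} (ha : 0 < a)
    (hb : ∀ j, 0 ≤ b j) :
    hypervolume 1 n (fun _ => a) b =
      ∫ y : Fin n → ℝ, ∏ j, (Set.Icc 0 1).indicator (· ^ (b j / a)) (y j) := by
  rw [hypervolume_eq_toReal_volume, Measure.volume_eq_prod,
    Measure.prod_apply_symm (measurableSet_hypervolumeSet _ _ _ _)]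
  simp_rw [volume_hypervolumeSet_one_section ha hb]
  refine (integral_eq_lintegral_of_nonneg_ae (ae_of_all _ fun y => ?_) ?_).symm
  · exact prod_nonneg fun j _ => Set.indicator_nonneg (fun t ht => Real.rpow_nonneg ht.1 _) _
  · exact (Finset.measurable_prod _ fun j _ =>
      ((by fun_prop : Measurable (· ^ (b j / a))).indicator measurableSet_Icc).comp
        (measurable_pi_apply j)).aestronglyMeasurable

theorem integral_indicator_Icc_zero_one_rpow {c : ℝ} (hc : -1 < c) :
    ∫ t, (Set.Icc (0 : ℝ) 1).indicator (· ^ c) t = 1 / (c + 1) := by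
  rw [integral_indicator measurableSet_Icc, integral_Icc_eq_integral_Ioc,
    ← intervalIntegral.integral_of_le zero_le_one, integral_rpow (Or.inl hc), Real.one_rpow,
    Real.zero_rpow (by linarith), sub_zero]

/-- `f(a₁; b₁,…,bₙ) = a₁ⁿ / ((a₁+b₁)(a₁+b₂)⋯(a₁+bₙ))`. -/
theorem stmt2 (n : ℕ) (a₁ : ℝ) (b : Fin n → ℝ) (ha : 0 < a₁) (hb : ∀ j, 0 < b j) :
    hypervolume 1 n (fun _ => a₁) b = a₁ ^ n / ∏ j, (a₁ + b j) := by
  have hfactor (j : Fin n) :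
      ∫ t, (Set.Icc (0 : ℝ) 1).indicator (· ^ (b j / a₁)) t = a₁ / (a₁ + b j) := by
    rw [integral_indicator_Icc_zero_one_rpow (by linarith [div_pos (hb j) ha])]
    field_simp
    ring
  rw [hypervolume_one_eq_integral ha fun j => (hb j).le, integral_fintype_prod_volume_eq_prod,
    prod_congr rfl fun j _ => hfactor j, prod_div_distrib, prod_const, card_univ,
    Fintype.card_fin]
end

section
/- The relation of 'matching' (that is, f(P;Q) = 1/2) is not transitive: f(60; 20,30) = 1/2, f(60; 15,36) = 1/2, and f(60; 12,40) = 1/2, yet f(20,30; 15,36) = 270/539 ≠ 1/2. -/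
/-!
By Fubini, `f(a; b)` is the integral over `y ∈ [0,1]ⁿ` of the volume `V_a(c)` of the sublevel set
`{x ∈ [0,1]ᵐ | ∏ xᵢ^{aᵢ} < c}` at `c = ∏ yⱼ^{bⱼ}`. For one variable `V_a(c) = c^{1/a}`, and for two
variables `a₁ < a₂` slicing gives `V_a(c) = (a₂ c^{1/a₂} - a₁ c^{1/a₁}) / (a₂ - a₁)`. Each power
`(∏ yⱼ^{bⱼ})^{1/a}` splits into a product of one-variable integrals `∫₀¹ y^{bⱼ/a} = a / (a + bⱼ)`, so
`f(a; b) = ∏ⱼ a / (a + bⱼ)` and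
`f(a₁, a₂; b) = (a₂ ∏ⱼ a₂ / (a₂ + bⱼ) - a₁ ∏ⱼ a₁ / (a₁ + bⱼ)) / (a₂ - a₁)`.
-/

open MeasureTheory Finset

open scoped ENNReal

abbrev unitCube (ι : Type*) : Set (ι → ℝ) := Set.univ.pi fun _ => Set.Icc 0 1

noncomputable def sublevelVolume {m : ℕ} (a : Fin m → ℝ) (c : ℝ) : ℝ≥0∞ :=
  volume {x : Fin m → ℝ | (∀ i, x i ∈ Set.Icc (0 : ℝ) 1) ∧ ∏ i, x i ^ a i < c}

lemma sublevelVolume_mono {m : ℕ} (a : Fin m → ℝ) : Monotone (sublevelVolume a) :=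
  fun _ _ hcd => measure_mono fun _ ⟨hx, hlt⟩ => ⟨hx, hlt.trans_le hcd⟩

lemma sublevelVolume_le_one {m : ℕ} (a : Fin m → ℝ) (c : ℝ) : sublevelVolume a c ≤ 1 :=
  calc sublevelVolume a c ≤ volume (unitCube (Fin m)) :=
        measure_mono fun _ hx => Set.mem_univ_pi.2 hx.1
    _ = 1 := by simp [Real.volume_Icc_pi]

theorem hypervolume_eq_setIntegral (m n : ℕ) (a : Fin m → ℝ) (b : Fin n → ℝ) :
    hypervolume m n a b =
      ∫ y in unitCube (Fin n), (sublevelVolume a (∏ j, y j ^ b j)).toReal := by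
  have hS : MeasurableSet {z : (Fin m → ℝ) × (Fin n → ℝ) |
      (∀ i, z.1 i ∈ Set.Icc (0 : ℝ) 1) ∧ (∀ j, z.2 j ∈ Set.Icc (0 : ℝ) 1) ∧
      ∏ i, (z.1 i) ^ (a i) < ∏ j, (z.2 j) ^ (b j)} := by
    measurability
  rw [hypervolume, Measure.volume_eq_prod, Measure.prod_apply_symm hS, integral_toReal,
    ← lintegral_indicator (MeasurableSet.univ_pi fun _ => measurableSet_Icc)]
  · congr 1
    refine lintegral_congr fun y => ?_
    by_cases hy : y ∈ unitCube (Fin n)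
    · rw [Set.indicator_of_mem hy, sublevelVolume]
      congr 1
      ext x
      exact ⟨fun h => ⟨h.1, h.2.2⟩, fun h => ⟨h.1, Set.mem_univ_pi.1 hy, h.2⟩⟩
    · rw [Set.indicator_of_notMem hy]
      convert measure_empty (μ := (volume : Measure (Fin m → ℝ)))
      exact Set.eq_empty_of_forall_notMem fun x hx => hy (Set.mem_univ_pi.2 hx.2.1)
  · exact ((sublevelVolume_mono a).measurable.comp (by fun_prop)).aemeasurable
  · exact ae_of_all _ fun y => (sublevelVolume_le_one a _).trans_lt ENNReal.one_lt_top

section UnitCube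

variable {ι : Type*} [Fintype ι]

lemma integral_Icc_zero_one_rpow {r : ℝ} (hr : -1 < r) :
    ∫ x in Set.Icc (0 : ℝ) 1, x ^ r = 1 / (r + 1) := by
  rw [integral_Icc_eq_integral_Ioc, ← intervalIntegral.integral_of_le zero_le_one,
    integral_rpow (Or.inl hr), Real.one_rpow, Real.zero_rpow (by linarith), sub_zero]

lemma setIntegral_unitCube_prod_rpow {e : ι → ℝ} (he : ∀ i, -1 < e i) :
    ∫ y in unitCube ι, ∏ i, y i ^ e i = ∏ i, 1 / (e i + 1) := by
  rw [volume_pi, Measure.restrict_pi_pi,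
    integral_fintype_prod_eq_prod (fun i (x : ℝ) => x ^ e i)]
  exact Finset.prod_congr rfl fun i _ => integral_Icc_zero_one_rpow (he i)

lemma prod_rpow_mem_Icc {y b : ι → ℝ} (hy : y ∈ unitCube ι) (hb : ∀ j, 0 ≤ b j) :
    ∏ j, y j ^ b j ∈ Set.Icc (0 : ℝ) 1 := by
  rw [Set.mem_univ_pi] at hy
  exact ⟨Finset.prod_nonneg fun j _ => Real.rpow_nonneg (hy j).1 _,
    Finset.prod_le_one (fun j _ => Real.rpow_nonneg (hy j).1 _)
      fun j _ => Real.rpow_le_one (hy j).1 (hy j).2 (hb j)⟩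

lemma prod_rpow_rpow {y : ι → ℝ} (hy : y ∈ unitCube ι) (b : ι → ℝ) (s : ℝ) :
    (∏ j, y j ^ b j) ^ s = ∏ j, y j ^ (b j * s) := by
  rw [Set.mem_univ_pi] at hy
  rw [← Real.finsetProd_rpow _ _ fun j _ => Real.rpow_nonneg (hy j).1 _]
  exact Finset.prod_congr rfl fun j _ => (Real.rpow_mul (hy j).1 _ _).symm

lemma setIntegral_unitCube_prod_rpow_rpow_inv {a : ℝ} {b : ι → ℝ} (ha : 0 < a)
    (hb : ∀ j, 0 ≤ b j) :
    ∫ y in unitCube ι, (∏ j, y j ^ b j) ^ a⁻¹ = ∏ j, a / (a + b j) := by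
  rw [setIntegral_congr_fun (MeasurableSet.univ_pi fun _ => measurableSet_Icc)
      fun y hy => prod_rpow_rpow hy b a⁻¹,
    setIntegral_unitCube_prod_rpow fun j =>
      neg_one_lt_zero.trans_le (mul_nonneg (hb j) (inv_nonneg.2 ha.le))]
  refine Finset.prod_congr rfl fun j _ => ?_
  field_simp
  ring

lemma integrableOn_unitCube_prod_rpow_rpow {b : ι → ℝ} {s : ℝ} (hb : ∀ j, 0 ≤ b j)
    (hs : 0 ≤ s) :
    IntegrableOn (fun y : ι → ℝ => (∏ j, y j ^ b j) ^ s) (unitCube ι) := by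
  have hcont : Continuous fun y : ι → ℝ => (∏ j, y j ^ b j) ^ s :=
    (Real.continuous_rpow_const hs).comp
      (continuous_finsetProd _ fun j _ => (Real.continuous_rpow_const (hb j)).comp
        (continuous_apply j))
  exact hcont.continuousOn.integrableOn_compact (isCompact_univ_pi fun _ => isCompact_Icc)

end UnitCube

lemma volume_Icc_rpow_lt {a c : ℝ} (ha : 0 < a) (hc : 0 ≤ c) :
    volume {t : ℝ | t ∈ Set.Icc (0 : ℝ) 1 ∧ t ^ a < c} = ENNReal.ofReal (min (c ^ a⁻¹) 1) := by
  have hlt {t : ℝ} (ht : 0 ≤ t) : t < c ^ a⁻¹ ↔ t ^ a < c := Real.lt_rpow_inv_iff_of_pos ht hc ha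
  have hsub : {t : ℝ | t ∈ Set.Icc (0 : ℝ) 1 ∧ t ^ a < c} ⊆ Set.Icc 0 (min (c ^ a⁻¹) 1) :=
    fun t ⟨⟨ht0, ht1⟩, htc⟩ => ⟨ht0, le_min ((hlt ht0).2 htc).le ht1⟩
  have hsup : Set.Ico 0 (min (c ^ a⁻¹) 1) ⊆ {t : ℝ | t ∈ Set.Icc (0 : ℝ) 1 ∧ t ^ a < c} :=
    fun t ⟨ht0, htm⟩ => ⟨⟨ht0, (htm.trans_le (min_le_right _ _)).le⟩,
      (hlt ht0).1 (htm.trans_le (min_le_left _ _))⟩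
  apply le_antisymm
  · simpa using measure_mono (μ := volume) hsub
  · simpa using measure_mono (μ := volume) hsup

lemma sublevelVolume_fin_one {a c : ℝ} (ha : 0 < a) (hc : 0 ≤ c) :
    sublevelVolume ![a] c = ENNReal.ofReal (min (c ^ a⁻¹) 1) := by
  have hS : MeasurableSet {t : ℝ | t ∈ Set.Icc (0 : ℝ) 1 ∧ t ^ a < c} := by measurability
  rw [← volume_Icc_rpow_lt ha hc,
    ← (volume_preserving_funUnique (Fin 1) ℝ).measure_preimage hS.nullMeasurableSet,
    sublevelVolume]
  congr 1
  ext x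
  simp [Fin.forall_fin_one]

theorem hypervolume_one_left {n : ℕ} {a : ℝ} {b : Fin n → ℝ} (ha : 0 < a)
    (hb : ∀ j, 0 ≤ b j) :
    hypervolume 1 n ![a] b = ∏ j, a / (a + b j) := by
  rw [hypervolume_eq_setIntegral, ← setIntegral_unitCube_prod_rpow_rpow_inv ha hb]
  refine setIntegral_congr_fun (MeasurableSet.univ_pi fun _ => measurableSet_Icc) fun y hy => ?_
  obtain ⟨hB0, hB1⟩ := prod_rpow_mem_Icc hy hb
  rw [sublevelVolume_fin_one ha hB0, min_eq_left (Real.rpow_le_one hB0 hB1 (by positivity)),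
    ENNReal.toReal_ofReal (by positivity)]

lemma sublevelVolume_fin_two (a₁ a₂ c : ℝ) :
    sublevelVolume ![a₁, a₂] c = volume {p : ℝ × ℝ |
      (p.1 ∈ Set.Icc (0 : ℝ) 1 ∧ p.2 ∈ Set.Icc (0 : ℝ) 1) ∧ p.1 ^ a₁ * p.2 ^ a₂ < c} := by
  have hS : MeasurableSet {p : ℝ × ℝ | (p.1 ∈ Set.Icc (0 : ℝ) 1 ∧ p.2 ∈ Set.Icc (0 : ℝ) 1) ∧
      p.1 ^ a₁ * p.2 ^ a₂ < c} := by
    measurability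
  rw [← (volume_preserving_piFinTwo fun _ => ℝ).measure_preimage hS.nullMeasurableSet,
    sublevelVolume]
  congr 1
  ext x
  simp [Fin.forall_fin_two, Fin.prod_univ_two]

lemma volume_unitSquare_rpow_mul_lt {a₁ a₂ t : ℝ} (ha₂ : 0 < a₂) (ht : 0 ≤ t) :
    volume {p : ℝ × ℝ | (p.1 ∈ Set.Icc (0 : ℝ) 1 ∧ p.2 ∈ Set.Icc (0 : ℝ) 1) ∧
        p.1 ^ a₁ * p.2 ^ a₂ < t ^ a₁} =
      ∫⁻ x in Set.Ioc 0 1, ENNReal.ofReal (min ((t / x) ^ (a₁ / a₂)) 1) := by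
  have hS : MeasurableSet {p : ℝ × ℝ | (p.1 ∈ Set.Icc (0 : ℝ) 1 ∧ p.2 ∈ Set.Icc (0 : ℝ) 1) ∧
      p.1 ^ a₁ * p.2 ^ a₂ < t ^ a₁} := by
    measurability
  rw [Measure.volume_eq_prod, Measure.prod_apply hS,
    ← setLIntegral_eq_of_support_subset (s := Set.Icc 0 1) fun x hx => ?_,
    Measure.restrict_congr_set Ioc_ae_eq_Icc.symm]
  · refine setLIntegral_congr_fun measurableSet_Ioc fun x ⟨hx0, hx1⟩ => ?_
    have hxa : 0 < x ^ a₁ := Real.rpow_pos_of_pos hx0 a₁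
    have htx : 0 ≤ t / x := div_nonneg ht hx0.le
    rw [div_eq_mul_inv a₁, Real.rpow_mul htx, Real.div_rpow ht hx0.le,
      ← volume_Icc_rpow_lt ha₂ (div_nonneg (Real.rpow_nonneg ht _) hxa.le)]
    congr 1
    ext y
    simp only [Set.mem_preimage, Set.mem_ofPred_eq, lt_div_iff₀' hxa]
    exact ⟨fun h => ⟨h.1.2, h.2⟩, fun h => ⟨⟨⟨hx0.le, hx1⟩, h.1⟩, h.2⟩⟩
  · by_contra hx'
    exact hx (measure_mono_null (fun p hp => hx' hp.1.1) measure_empty)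

lemma lintegral_Ioc_rpow {r t u : ℝ} (hr : -1 < r) (ht : 0 ≤ t) (htu : t ≤ u) :
    ∫⁻ x in Set.Ioc t u, ENNReal.ofReal (x ^ r) =
      ENNReal.ofReal ((u ^ (r + 1) - t ^ (r + 1)) / (r + 1)) := by
  rw [← ofReal_integral_eq_lintegral_ofReal, ← intervalIntegral.integral_of_le htu,
    integral_rpow (Or.inl hr)]
  · exact (intervalIntegral.intervalIntegrable_rpow' hr).1
  · filter_upwards [ae_restrict_mem measurableSet_Ioc] with x hx
    exact Real.rpow_nonneg (ht.trans hx.1.le) r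

lemma lintegral_Ioc_min_div_rpow {q t : ℝ} (hq0 : 0 ≤ q) (hq1 : q < 1) (ht0 : 0 ≤ t)
    (ht1 : t ≤ 1) :
    ∫⁻ x in Set.Ioc 0 1, ENNReal.ofReal (min ((t / x) ^ q) 1) =
      ENNReal.ofReal ((t ^ q - q * t) / (1 - q)) := by
  have hone : Set.EqOn (fun x => ENNReal.ofReal (min ((t / x) ^ q) 1)) 1 (Set.Ioc 0 t) :=
    fun x ⟨hx0, hxt⟩ => by
      simp [Real.one_le_rpow ((one_le_div hx0).2 hxt) hq0]
  have hpow : Set.EqOn (fun x => ENNReal.ofReal (min ((t / x) ^ q) 1))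
      (fun x => ENNReal.ofReal (t ^ q) * ENNReal.ofReal (x ^ (-q))) (Set.Ioc t 1) :=
    fun x ⟨htx, _⟩ => by
      have hx0 : 0 < x := ht0.trans_lt htx
      dsimp only
      rw [min_eq_left (Real.rpow_le_one (by positivity) ((div_le_one hx0).2 htx.le) hq0),
        ← ENNReal.ofReal_mul (by positivity), Real.div_rpow ht0 hx0.le, Real.rpow_neg hx0.le,
        div_eq_mul_inv]
  have hY : 0 ≤ (1 - t ^ (1 - q)) / (1 - q) :=
    div_nonneg (sub_nonneg.2 (Real.rpow_le_one ht0 ht1 (by linarith))) (by linarith)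
  have hsplit : t ^ q * t ^ (1 - q) = t := by
    rw [← Real.rpow_add' ht0 (by norm_num), add_sub_cancel, Real.rpow_one]
  rw [← Set.Ioc_union_Ioc_eq_Ioc ht0 ht1,
    lintegral_union measurableSet_Ioc (Set.Ioc_disjoint_Ioc_of_le le_rfl),
    setLIntegral_congr_fun measurableSet_Ioc hone, setLIntegral_congr_fun measurableSet_Ioc hpow,
    Pi.one_def, setLIntegral_one, Real.volume_Ioc, sub_zero,
    lintegral_const_mul' _ _ ENNReal.ofReal_ne_top,
    lintegral_Ioc_rpow (by linarith) ht0 ht1, Real.one_rpow, neg_add_eq_sub,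
    ← ENNReal.ofReal_mul (Real.rpow_nonneg ht0 q),
    ← ENNReal.ofReal_add ht0 (mul_nonneg (Real.rpow_nonneg ht0 q) hY)]
  congr 1
  have hq : 1 - q ≠ 0 := by linarith
  field_simp
  linear_combination (-1) * hsplit

lemma toReal_sublevelVolume_fin_two {a₁ a₂ c : ℝ} (ha₁ : 0 < a₁) (ha₁₂ : a₁ < a₂)
    (hc : c ∈ Set.Icc (0 : ℝ) 1) :
    (sublevelVolume ![a₁, a₂] c).toReal = (a₂ * c ^ a₂⁻¹ - a₁ * c ^ a₁⁻¹) / (a₂ - a₁) := by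
  have ha₂ : 0 < a₂ := ha₁.trans ha₁₂
  obtain ⟨hc0, hc1⟩ := hc
  set t := c ^ a₁⁻¹ with ht_def
  have ht0 : 0 ≤ t := Real.rpow_nonneg hc0 _
  have ht1 : t ≤ 1 := Real.rpow_le_one hc0 hc1 (by positivity)
  have htc : t ^ a₁ = c := by
    rw [ht_def, ← Real.rpow_mul hc0, inv_mul_cancel₀ ha₁.ne', Real.rpow_one]
  have htq : t ^ (a₁ / a₂) = c ^ a₂⁻¹ := by
    rw [ht_def, ← Real.rpow_mul hc0, inv_mul_eq_div, div_div_cancel_left' ha₁.ne']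
  have hq1 : a₁ / a₂ < 1 := (div_lt_one ha₂).2 ha₁₂
  have hnonneg : 0 ≤ (t ^ (a₁ / a₂) - a₁ / a₂ * t) / (1 - a₁ / a₂) :=
    div_nonneg (sub_nonneg.2 ((mul_le_of_le_one_left ht0 hq1.le).trans
      (Real.self_le_rpow_of_le_one ht0 ht1 hq1.le))) (by linarith)
  conv_lhs => rw [sublevelVolume_fin_two, ← htc]
  rw [volume_unitSquare_rpow_mul_lt ha₂ ht0,
    lintegral_Ioc_min_div_rpow (by positivity) hq1 ht0 ht1, ENNReal.toReal_ofReal hnonneg, htq]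
  have ha : a₂ - a₁ ≠ 0 := sub_ne_zero.2 ha₁₂.ne'
  field_simp

theorem hypervolume_two_left {n : ℕ} {a₁ a₂ : ℝ} {b : Fin n → ℝ} (ha₁ : 0 < a₁)
    (ha₁₂ : a₁ < a₂) (hb : ∀ j, 0 ≤ b j) :
    hypervolume 2 n ![a₁, a₂] b =
      (a₂ * ∏ j, a₂ / (a₂ + b j) - a₁ * ∏ j, a₁ / (a₁ + b j)) / (a₂ - a₁) := by
  have ha₂ : 0 < a₂ := ha₁.trans ha₁₂
  rw [hypervolume_eq_setIntegral, setIntegral_congr_fun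
      (MeasurableSet.univ_pi fun _ => measurableSet_Icc)
      fun y hy => toReal_sublevelVolume_fin_two ha₁ ha₁₂ (prod_rpow_mem_Icc hy hb),
    integral_div, integral_sub, integral_const_mul, integral_const_mul,
    setIntegral_unitCube_prod_rpow_rpow_inv ha₂ hb, setIntegral_unitCube_prod_rpow_rpow_inv ha₁ hb]
  · exact (integrableOn_unitCube_prod_rpow_rpow hb (inv_nonneg.2 ha₂.le)).const_mul a₂
  · exact (integrableOn_unitCube_prod_rpow_rpow hb (inv_nonneg.2 ha₁.le)).const_mul a₁

/-- 'matching' (`f(P;Q) = 1/2`) is not transitive: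
`f(60; 20,30) = f(60; 15,36) = f(60; 12,40) = 1/2`, yet
`f(20,30; 15,36) = 270/539 ≠ 1/2`. -/
theorem stmt18 :
    hypervolume 1 2 ![60] ![20, 30] = 1 / 2 ∧
    hypervolume 1 2 ![60] ![15, 36] = 1 / 2 ∧
    hypervolume 1 2 ![60] ![12, 40] = 1 / 2 ∧
    hypervolume 2 2 ![20, 30] ![15, 36] = 270 / 539 ∧
    hypervolume 2 2 ![20, 30] ![15, 36] ≠ 1 / 2 := by
  have hb {b₁ b₂ : ℝ} (h₁ : 0 ≤ b₁) (h₂ : 0 ≤ b₂) : ∀ j, 0 ≤ ![b₁, b₂] j := by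
    simp [Fin.forall_fin_two, h₁, h₂]
  have h₂₂ : hypervolume 2 2 ![20, 30] ![15, 36] = 270 / 539 := by
    rw [hypervolume_two_left (by norm_num) (by norm_num) (hb (by norm_num) (by norm_num))]
    norm_num [Fin.prod_univ_two]
  refine ⟨?_, ?_, ?_, h₂₂, by rw [h₂₂]; norm_num⟩ <;>
  · rw [hypervolume_one_left (by norm_num) (hb (by norm_num) (by norm_num))]
    norm_num [Fin.prod_univ_two]
end
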